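/- arXiv:2308.02881 — 2 statements merged into one kernel-verified Lean document; each statement's English description precedes it below -/
import Mathlib

section
/- Let F be coordinate-wise smooth with constants L, g = ∇F(w), and let v ∈ {−1,+1}^q be a (possibly erroneous) sign vector. Then F(w − ηv) − F(w) ≤ −η‖g‖₁ + (η²/2)‖L‖₁ + 2η·Σᵢ |gᵢ|·𝟙[vᵢ ≠ sign(gᵢ)]. -/
open Finset

/-- Sign with the convention `mySign x = +1` for `x > 0` and `−1` for `x ≤ 0`. -/
noncomputable def mySign (x : ℝ) : ℝ := if 0 < x then 1 else -1

/-- For `F` coordinate-wise smooth with constants `L`, gradient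
`g = ∇F(w)` at `w`, and a (possibly erroneous) sign vector `v ∈ {−1,+1}^q`,
`F(w − ηv) − F(w) ≤ −η‖g‖₁ + (η²/2)‖L‖₁ + 2η·Σᵢ |gᵢ|·𝟙[vᵢ ≠ sign(gᵢ)]`. -/
theorem stmt_9 (q : ℕ) (F : (Fin q → ℝ) → ℝ) (L g w v : Fin q → ℝ) (η : ℝ)
    (hη : 0 < η)
    (hsmooth : ∀ w' : Fin q → ℝ,
      |F w' - F w - ∑ i, g i * (w' i - w i)|
        ≤ (1 / 2) * ∑ i, L i * (w' i - w i) ^ 2)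
    (hv : ∀ i, v i = 1 ∨ v i = -1) :
    F (w - η • v) - F w
      ≤ -η * (∑ i, |g i|) + η ^ 2 / 2 * (∑ i, L i)
        + 2 * η * ∑ i, |g i| * (if v i ≠ mySign (g i) then (1 : ℝ) else 0) := by
  have hd : ∀ i, (w - η • v) i - w i = -η * v i := by
    intro i; simp [Pi.sub_apply]
  have h := abs_le.mp (hsmooth (w - η • v))
  have h1 : F (w - η • v) - F w
      ≤ (∑ i, g i * (-η * v i)) + (1 / 2) * ∑ i, L i * (-η * v i) ^ 2 := by
    have := h.2
    simp only [hd] at this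
    linarith
  have hsum1 : (∑ i, g i * (-η * v i))
      = -η * (∑ i, |g i|)
        + 2 * η * ∑ i, |g i| * (if v i ≠ mySign (g i) then (1 : ℝ) else 0) := by
    rw [Finset.mul_sum, Finset.mul_sum, ← Finset.sum_add_distrib]
    apply Finset.sum_congr rfl
    intro i _
    rcases hv i with h1 | h1 <;>
      rcases lt_or_ge 0 (g i) with hg | hg <;>
      simp [h1, mySign, hg, hg.not_gt, abs_of_pos, abs_of_nonpos] <;> norm_num <;> ring
  have hsum2 : (1 / 2) * (∑ i, L i * (-η * v i) ^ 2) = η ^ 2 / 2 * (∑ i, L i) := by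
    rw [Finset.mul_sum, Finset.mul_sum]
    apply Finset.sum_congr rfl
    intro i _
    rcases hv i with h1 | h1 <;> rw [h1] <;> ring
  linarith
end

section
/- Suppose for each coordinate the sign error event has probability Pᵢᵉʳʳ and the update is w^(n+1) = w^(n) − η·v^(n) with v^(n) ∈ {−1,+1}^q. Then the conditional expected improvement satisfies E[F(w^(n+1)) − F(w^(n)) | w^(n)] ≤ −η‖g^(n)‖₁ + (η²/2)‖L‖₁ + 2η·Σᵢ |gᵢ^(n)|·Pᵢᵉʳʳ. -/
/-! Smoothness bounds the one-step change by the linear term `-η ∑ gᵢ vᵢ` plus `η²/2 ∑ Lᵢ`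
(as `vᵢ² = 1`). Coordinatewise, `-η gᵢ vᵢ` equals `-η |gᵢ|` when `vᵢ` has the sign of `gᵢ`
and `+η |gᵢ| = -η |gᵢ| + 2η |gᵢ|` otherwise, so the change is bounded pathwise by a constant
plus `∑ᵢ 2η |gᵢ| 𝟙[vᵢ ≠ sign gᵢ]`; integrating turns the indicators into the error
probabilities. -/

open Finset MeasureTheory

theorem mul_mySign_self (x : ℝ) : x * mySign x = |x| := by
  unfold mySign
  split_ifs with hx
  · rw [abs_of_pos hx, mul_one]
  · rw [abs_of_nonpos (not_lt.mp hx)]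
    ring

theorem mySign_eq_one_or_eq_neg_one (x : ℝ) : mySign x = 1 ∨ mySign x = -1 := by
  unfold mySign
  split_ifs <;> simp

theorem eq_neg_of_ne_of_eq_one_or_eq_neg_one {s t : ℝ} (hs : s = 1 ∨ s = -1)
    (ht : t = 1 ∨ t = -1) (hne : s ≠ t) : s = -t := by
  rcases hs with rfl | rfl <;> rcases ht with rfl | rfl <;> norm_num at *

theorem neg_mul_mul_eq_of_eq_one_or_eq_neg_one (η x : ℝ) {s : ℝ} (hs : s = 1 ∨ s = -1) :
    -η * (x * s) = -η * |x| + if s ≠ mySign x then 2 * η * |x| else 0 := by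
  split_ifs with hne
  · rw [eq_neg_of_ne_of_eq_one_or_eq_neg_one hs (mySign_eq_one_or_eq_neg_one x) hne,
      mul_neg, mul_mySign_self]
    ring
  · rw [not_not.mp hne, mul_mySign_self, add_zero]

theorem sub_le_of_smooth_of_eq_one_or_eq_neg_one {q : ℕ} {F : (Fin q → ℝ) → ℝ}
    {L g w : Fin q → ℝ}
    (hsmooth : ∀ w' : Fin q → ℝ,
      |F w' - F w - ∑ i, g i * (w' i - w i)| ≤ (1 / 2) * ∑ i, L i * (w' i - w i) ^ 2)
    (η : ℝ) {s : Fin q → ℝ} (hs : ∀ i, s i = 1 ∨ s i = -1) :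
    F (w - η • s) - F w ≤ -η * ∑ i, g i * s i + η ^ 2 / 2 * ∑ i, L i := by
  have hstep : ∀ i, (w - η • s) i - w i = -η * s i := fun i => by
    simp only [Pi.sub_apply, Pi.smul_apply, smul_eq_mul]
    ring
  have hlin : ∑ i, g i * ((w - η • s) i - w i) = -η * ∑ i, g i * s i := by
    rw [mul_sum]
    exact sum_congr rfl fun i _ => by rw [hstep]; ring
  have hquad : ∑ i, L i * ((w - η • s) i - w i) ^ 2 = η ^ 2 * ∑ i, L i := by
    rw [mul_sum]
    refine sum_congr rfl fun i _ => ?_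
    rw [hstep]
    rcases hs i with h | h <;> rw [h] <;> ring
  have hupper := (abs_le.mp (hsmooth (w - η • s))).2
  rw [hlin, hquad] at hupper
  linarith

theorem sub_le_add_sum_indicator_sign_error {Ω : Type*} {q : ℕ} {F : (Fin q → ℝ) → ℝ}
    {L g w : Fin q → ℝ}
    (hsmooth : ∀ w' : Fin q → ℝ,
      |F w' - F w - ∑ i, g i * (w' i - w i)| ≤ (1 / 2) * ∑ i, L i * (w' i - w i) ^ 2)
    (η : ℝ) {v : Fin q → Ω → ℝ} (hv : ∀ i ω, v i ω = 1 ∨ v i ω = -1) (ω : Ω) :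
    F (w - η • fun i => v i ω) - F w
      ≤ -η * (∑ i, |g i|) + η ^ 2 / 2 * (∑ i, L i)
        + ∑ i, {ω | v i ω ≠ mySign (g i)}.indicator (fun _ => 2 * η * |g i|) ω := by
  have hlin : -η * ∑ i, g i * v i ω
      = -η * ∑ i, |g i|
        + ∑ i, {ω | v i ω ≠ mySign (g i)}.indicator (fun _ => 2 * η * |g i|) ω := by
    simp only [mul_sum, Set.indicator_apply, Set.mem_ofPred_eq, ← sum_add_distrib]
    exact sum_congr rfl fun i _ => neg_mul_mul_eq_of_eq_one_or_eq_neg_one η (g i) (hv i ω)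
  linarith [sub_le_of_smooth_of_eq_one_or_eq_neg_one hsmooth η (s := fun i => v i ω) (hv · ω)]

theorem integral_const_add_sum_indicator {Ω : Type*} [MeasurableSpace Ω] (μ : Measure Ω)
    [IsProbabilityMeasure μ] {ι : Type*} (s : Finset ι) (a : ℝ) (c : ι → ℝ) {S : ι → Set Ω}
    (hS : ∀ i, MeasurableSet (S i)) :
    ∫ ω, (a + ∑ i ∈ s, (S i).indicator (fun _ => c i) ω) ∂μ
      = a + ∑ i ∈ s, c i * (μ (S i)).toReal := by
  have hind : ∀ i, Integrable ((S i).indicator fun _ => c i) μ :=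
    fun i => (integrable_const _).indicator (hS i)
  rw [integral_add (integrable_const _) (integrable_finsetSum _ fun i _ => hind i),
    integral_const, integral_finsetSum _ fun i _ => hind i, probReal_univ, one_smul]
  refine congrArg (a + ·) (sum_congr rfl fun i _ => ?_)
  rw [integral_indicator_const _ (hS i), smul_eq_mul, mul_comm, Measure.real]

theorem stmt_16_general {Ω : Type*} [MeasurableSpace Ω] (ℙ : Measure Ω)
    [IsProbabilityMeasure ℙ]
    (q : ℕ) (F : (Fin q → ℝ) → ℝ) (L g w : Fin q → ℝ) (η : ℝ)
    (v : Fin q → Ω → ℝ) (hvm : ∀ i, Measurable (v i))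
    (hv : ∀ i ω, v i ω = 1 ∨ v i ω = -1)
    (hsmooth : ∀ w' : Fin q → ℝ,
      |F w' - F w - ∑ i, g i * (w' i - w i)|
        ≤ (1 / 2) * ∑ i, L i * (w' i - w i) ^ 2)
    (hint : Integrable (fun ω => F (w - η • fun i => v i ω)) ℙ) :
    ∫ ω, (F (w - η • fun i => v i ω) - F w) ∂ℙ
      ≤ -η * (∑ i, |g i|) + η ^ 2 / 2 * (∑ i, L i)
        + 2 * η * ∑ i, |g i| * (ℙ {ω | v i ω ≠ mySign (g i)}).toReal := by
  have hS : ∀ i, MeasurableSet {ω | v i ω ≠ mySign (g i)} :=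
    fun i => hvm i (measurableSet_singleton _).compl
  have hbound : Integrable (fun ω => -η * (∑ i, |g i|) + η ^ 2 / 2 * (∑ i, L i)
      + ∑ i, {ω | v i ω ≠ mySign (g i)}.indicator (fun _ => 2 * η * |g i|) ω) ℙ :=
    (integrable_const _).add
      (integrable_finsetSum _ fun i _ => (integrable_const _).indicator (hS i))
  calc ∫ ω, (F (w - η • fun i => v i ω) - F w) ∂ℙ
      ≤ ∫ ω, (-η * (∑ i, |g i|) + η ^ 2 / 2 * (∑ i, L i)
          + ∑ i, {ω | v i ω ≠ mySign (g i)}.indicator (fun _ => 2 * η * |g i|) ω) ∂ℙ :=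
        integral_mono (hint.sub (integrable_const _)) hbound
          (sub_le_add_sum_indicator_sign_error hsmooth η hv)
    _ = _ := by
        rw [integral_const_add_sum_indicator ℙ _ _ _ hS, mul_sum _ _ (2 * η)]
        simp only [mul_assoc]

/-- With the update `w^(n+1) = w^(n) − η·v^(n)` where
`v^(n) ∈ {−1,+1}^q` is random with per-coordinate sign-error probability
`Pᵢᵉʳʳ = P[vᵢ ≠ sign(gᵢ)]`, coordinate-wise smoothness gives
`E[F(w^(n+1)) − F(w^(n)) | w^(n)] ≤ −η‖g‖₁ + (η²/2)‖L‖₁ + 2η·Σᵢ|gᵢ|·Pᵢᵉʳʳ`. -/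
theorem stmt_16 {Ω : Type*} [MeasurableSpace Ω] (ℙ : Measure Ω)
    [IsProbabilityMeasure ℙ]
    (q : ℕ) (F : (Fin q → ℝ) → ℝ) (L g w : Fin q → ℝ) (η : ℝ) (hη : 0 < η)
    (v : Fin q → Ω → ℝ) (hvm : ∀ i, Measurable (v i))
    (hv : ∀ i ω, v i ω = 1 ∨ v i ω = -1)
    (hsmooth : ∀ w' : Fin q → ℝ,
      |F w' - F w - ∑ i, g i * (w' i - w i)|
        ≤ (1 / 2) * ∑ i, L i * (w' i - w i) ^ 2)
    (hint : Integrable (fun ω => F (w - η • fun i => v i ω)) ℙ) :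
    ∫ ω, (F (w - η • fun i => v i ω) - F w) ∂ℙ
      ≤ -η * (∑ i, |g i|) + η ^ 2 / 2 * (∑ i, L i)
        + 2 * η * ∑ i, |g i| * (ℙ {ω | v i ω ≠ mySign (g i)}).toReal :=
  stmt_16_general ℙ q F L g w η v hvm hv hsmooth hint
end
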